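/- Let (x_n) be the van der Corput sequence in base 2 and F_N(s) = (1/N)·#{1 ≤ k ≠ l ≤ N : ‖x_k - x_l‖ ≤ s/N}. Then for every nonnegative integer l, every real s ∈ [l, l+1), and every M ≥ 0, F_{2^M}(s) = 2l, provided l < 2^{M-1}. -/

import Mathlib

open scoped Classical

/-- Radical-inverse function in base 2. -/
noncomputable def g2 (n : ℕ) : ℝ :=
  ∑ j ∈ Finset.range (n + 1), (if n.testBit j then ((2 : ℝ) ^ (j + 1))⁻¹ else 0)

/-- Van der Corput sequence in base 2, indexed from 1, with x₁ = 0. -/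
noncomputable def vdc (i : ℕ) : ℝ := g2 (i - 1)

/-- Distance to the nearest integer. -/
noncomputable def nint (x : ℝ) : ℝ := |x - round x|

/-- Finite empiric pair correlation function of the van der Corput sequence in base 2. -/
noncomputable def F (N : ℕ) (s : ℝ) : ℝ :=
  (((Finset.Icc 1 N ×ˢ Finset.Icc 1 N).filter
      (fun p => p.1 ≠ p.2 ∧ nint (vdc p.1 - vdc p.2) ≤ s / N)).card : ℝ) / N

/-! For `N = 2 ^ M` the first `N` terms of the van der Corput sequence are the fractions `k / N`,
`0 ≤ k < N`, in bit-reversed order of their indices. Hence `N · F_N(s)` counts the pairs of distinct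
residues `x, y` mod `N` whose difference, represented in `(-N/2, N/2]`, has absolute value at most
`⌊s⌋ = l`. Since `2 l < N`, each `x` has exactly `2 l` such partners `y`. -/

open Finset

def bitRev : ℕ → ℕ → ℕ
  | 0, _ => 0
  | M + 1, n => n % 2 * 2 ^ M + bitRev M (n / 2)

lemma bitRev_lt (M n : ℕ) : bitRev M n < 2 ^ M := by
  induction M generalizing n with
  | zero => simp [bitRev]
  | succ M ih =>
    have := ih (n / 2)
    have : n % 2 ≤ 1 := Nat.le_of_lt_succ (Nat.mod_lt n two_pos)
    rw [bitRev, pow_succ]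
    nlinarith

lemma bitRev_injOn (M : ℕ) : Set.InjOn (bitRev M) (Set.Iio (2 ^ M)) := by
  induction M with
  | zero => intro a ha b hb _; simp_all
  | succ M ih =>
    intro a ha b hb h
    simp only [Set.mem_Iio, bitRev] at ha hb h
    have ha' := bitRev_lt M (a / 2)
    have hb' := bitRev_lt M (b / 2)
    have hmod : a % 2 = b % 2 := by
      rcases Nat.mod_two_eq_zero_or_one a with h1 | h1 <;>
        rcases Nat.mod_two_eq_zero_or_one b with h2 | h2 <;> simp [h1, h2] at h ⊢ <;> omega
    have hdiv : a / 2 = b / 2 :=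
      ih (by simp only [Set.mem_Iio]; omega) (by simp only [Set.mem_Iio]; omega)
        (by rw [hmod] at h; omega)
    omega

lemma sum_range_testBit_eq_of_lt_two_pow {n K K' : ℕ} (hn : n < 2 ^ K) (hK : K ≤ K')
    (f : ℕ → ℝ) :
    ∑ j ∈ range K, (if n.testBit j then f j else 0) =
      ∑ j ∈ range K', (if n.testBit j then f j else 0) := by
  refine sum_subset (range_subset_range.mpr hK) fun j _ hj => ?_
  have : n < 2 ^ j := hn.trans_le (Nat.pow_le_pow_right two_pos (by simpa using hj))
  simp [Nat.testBit_eq_false_of_lt this]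

lemma sum_range_testBit_eq_bitRev_div (K n : ℕ) :
    ∑ j ∈ range K, (if n.testBit j then ((2 : ℝ) ^ (j + 1))⁻¹ else 0) =
      bitRev K n / 2 ^ K := by
  induction K generalizing n with
  | zero => simp [bitRev]
  | succ K ih =>
    have halve : ∀ j, (if (n / 2).testBit j then ((2 : ℝ) ^ (j + 1 + 1))⁻¹ else 0) =
        (if (n / 2).testBit j then ((2 : ℝ) ^ (j + 1))⁻¹ else 0) / 2 := by
      intro j; split_ifs <;> ring
    rw [sum_range_succ', bitRev]
    simp only [Nat.testBit_succ, halve, ← sum_div, ih, Nat.testBit_zero]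
    rcases Nat.mod_two_eq_zero_or_one n with h | h <;> simp [h] <;> field_simp <;> ring

lemma g2_eq_bitRev_div {M n : ℕ} (hn : n < 2 ^ M) : g2 n = bitRev M n / 2 ^ M := by
  have hn' : n < 2 ^ (n + 1) := n.lt_two_pow_self.trans (Nat.pow_lt_pow_succ one_lt_two)
  rw [g2, sum_range_testBit_eq_of_lt_two_pow hn' (le_max_left _ M),
    ← sum_range_testBit_eq_of_lt_two_pow hn (le_max_right (n + 1) M),
    sum_range_testBit_eq_bitRev_div]

lemma nint_add_intCast (x : ℝ) (m : ℤ) : nint (x + m) = nint x := by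
  simp only [nint, round_add_intCast, Int.cast_add, add_sub_add_right_eq_sub]

lemma nint_eq_abs_of_abs_le_half {x : ℝ} (hx : |x| ≤ 1 / 2) : nint x = |x| := by
  refine le_antisymm (by simpa [nint] using round_le x 0) ?_
  rcases eq_or_ne (round x) 0 with h | h
  · simp [nint, h]
  · have h1 : (1 : ℝ) ≤ |(round x : ℝ)| := by exact_mod_cast Int.one_le_abs h
    have h2 := abs_sub_abs_le_abs_sub (round x : ℝ) x
    rw [abs_sub_comm] at h2
    unfold nint
    linarith

lemma nint_intCast_div (N : ℕ) [NeZero N] (z : ℤ) :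
    nint (z / N) = |((z : ZMod N).valMinAbs : ℝ)| / N := by
  set v := (z : ZMod N).valMinAbs
  have hN : (0 : ℝ) < N := by exact_mod_cast Nat.pos_of_neZero N
  obtain ⟨k, hk⟩ : (N : ℤ) ∣ z - v := by
    rw [← ZMod.intCast_zmod_eq_zero_iff_dvd]
    simp [v, ZMod.coe_valMinAbs]
  have hz : (z : ℝ) / N = v / N + k := by
    rw [show z = v + N * k by omega]; push_cast; field_simp
  have hv : |(v : ℝ) / N| ≤ 1 / 2 := by
    obtain ⟨hlo, hhi⟩ := ZMod.valMinAbs_mem_Ioc (z : ZMod N)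
    have : |v| * 2 ≤ N := by rcases abs_cases v with ⟨h, _⟩ | ⟨h, _⟩ <;> omega
    rw [abs_div, abs_of_pos hN, div_le_iff₀ hN]
    have : |(v : ℝ)| * 2 ≤ N := by exact_mod_cast this
    linarith
  rw [hz, nint_add_intCast, nint_eq_abs_of_abs_le_half hv, abs_div, abs_of_pos hN]

lemma nint_intCast_div_le_iff {N l : ℕ} [NeZero N] {s : ℝ} (h1 : (l : ℝ) ≤ s) (h2 : s < l + 1)
    (z : ℤ) : nint (z / N) ≤ s / N ↔ |(z : ZMod N).valMinAbs| ≤ l := by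
  have hN : (0 : ℝ) < N := by exact_mod_cast Nat.pos_of_neZero N
  rw [nint_intCast_div, div_le_div_iff_of_pos_right hN]
  constructor
  · intro h
    have : |(z : ZMod N).valMinAbs| < (l : ℤ) + 1 := by exact_mod_cast (h.trans_lt h2)
    omega
  · intro h
    exact le_trans (by exact_mod_cast h) h1

lemma card_filter_sub_eq {G : Type*} [AddGroup G] [Fintype G] (P : G → Prop)
    [DecidablePred P] :
    #{p : G × G | P (p.1 - p.2)} = #{z | P z} * Fintype.card G := by
  let e : G × G ≃ G × G :=
    { toFun := fun p => (p.1 - p.2, p.2)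
      invFun := fun q => (q.1 + q.2, q.2)
      left_inv := fun p => by simp
      right_inv := fun q => by simp }
  rw [card_equiv e (t := ({z | P z} : Finset G) ×ˢ univ) (fun p => by simp [e]), card_product,
    card_univ]

lemma card_filter_product_eq_of_bijOn {α β : Type*} {s : Finset α} {t : Finset β} {f : α → β}
    (hf : Set.BijOn f s t) (P : β → β → Prop) [DecidableRel P] :
    #{p ∈ s ×ˢ s | P (f p.1) (f p.2)} = #{q ∈ t ×ˢ t | P q.1 q.2} := by
  apply card_nbij (Prod.map f f)
  · intro p hp
    simp only [coe_filter, mem_product, Set.mem_ofPred_eq] at hp ⊢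
    exact ⟨⟨hf.mapsTo hp.1.1, hf.mapsTo hp.1.2⟩, hp.2⟩
  · intro p hp q hq h
    simp only [coe_filter, mem_product, Set.mem_ofPred_eq] at hp hq
    simp only [Prod.map, Prod.mk.injEq] at h
    exact Prod.ext (hf.injOn hp.1.1 hq.1.1 h.1) (hf.injOn hp.1.2 hq.1.2 h.2)
  · rintro ⟨x, y⟩ hq
    simp only [coe_filter, mem_product, Set.mem_ofPred_eq] at hq
    obtain ⟨a, ha, rfl⟩ := hf.surjOn hq.1.1
    obtain ⟨b, hb, rfl⟩ := hf.surjOn hq.1.2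
    exact ⟨(a, b), by simpa using ⟨⟨ha, hb⟩, hq.2⟩, rfl⟩

lemma card_filter_valMinAbs_le {N l : ℕ} [NeZero N] (h : 2 * l < N) :
    #{z : ZMod N | z ≠ 0 ∧ |z.valMinAbs| ≤ l} = 2 * l := by
  have hspec : ∀ d : ℤ, |d| ≤ l → (d : ZMod N).valMinAbs = d := fun d hd =>
    ((d : ZMod N).valMinAbs_spec d).mpr
      ⟨rfl, by rcases abs_cases d with ⟨_, _⟩ | ⟨_, _⟩ <;> constructor <;> omega⟩
  calc #{z : ZMod N | z ≠ 0 ∧ |z.valMinAbs| ≤ l}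
      = #((Icc (-l : ℤ) l).erase 0) := by
        apply card_nbij' ZMod.valMinAbs (fun d : ℤ => (d : ZMod N))
        · intro z hz
          simp only [coe_filter, mem_univ, true_and, Set.mem_ofPred_eq, coe_erase, coe_Icc,
            Set.mem_sdiff, Set.mem_Icc, Set.mem_singleton_iff, ZMod.valMinAbs_eq_zero] at hz ⊢
          exact ⟨abs_le.mp hz.2, hz.1⟩
        · intro d hd
          simp only [coe_filter, mem_univ, true_and, Set.mem_ofPred_eq, coe_erase, coe_Icc,
            Set.mem_sdiff, Set.mem_Icc, Set.mem_singleton_iff] at hd ⊢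
          rw [Ne, ← ZMod.valMinAbs_eq_zero, hspec d (abs_le.mpr hd.1)]
          exact ⟨hd.2, abs_le.mpr hd.1⟩
        · intro z _
          exact ZMod.coe_valMinAbs z
        · intro d hd
          simp only [coe_erase, coe_Icc, Set.mem_sdiff, Set.mem_Icc] at hd
          exact hspec d (abs_le.mpr hd.1)
    _ = 2 * l := by
        rw [card_erase_of_mem (by simp), Int.card_Icc]
        omega

def vdcResidue (M i : ℕ) : ZMod (2 ^ M) := bitRev M (i - 1)

lemma bijOn_vdcResidue (M : ℕ) :
    Set.BijOn (vdcResidue M) (Icc 1 (2 ^ M)) (univ : Finset (ZMod (2 ^ M))) := by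
  have hinj : Set.InjOn (vdcResidue M) (Icc 1 (2 ^ M)) := by
    intro i hi j hj h
    simp only [coe_Icc, Set.mem_Icc, vdcResidue, ZMod.natCast_eq_natCast_iff',
      Nat.mod_eq_of_lt (bitRev_lt _ _)] at hi hj h
    have := bitRev_injOn M (by simp only [Set.mem_Iio]; omega) (by simp only [Set.mem_Iio]; omega)
      h
    omega
  refine ⟨fun _ _ => mem_coe.mpr (mem_univ _), hinj, ?_⟩
  exact surjOn_of_injOn_of_card_le _ (fun _ _ => mem_univ _) hinj (by simp)

lemma vdc_eq_vdcResidue_div {M i : ℕ} (hi : i ∈ Icc 1 (2 ^ M)) :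
    vdc i = (vdcResidue M i).val / (2 ^ M : ℕ) := by
  rw [mem_Icc] at hi
  rw [vdc, vdcResidue, ZMod.val_natCast, Nat.mod_eq_of_lt (bitRev_lt _ _),
    g2_eq_bitRev_div (M := M) (by omega), Nat.cast_pow, Nat.cast_ofNat]

lemma ne_and_nint_vdc_sub_le_iff {M l : ℕ} {s : ℝ} (h1 : (l : ℝ) ≤ s) (h2 : s < l + 1) {i j : ℕ}
    (hi : i ∈ Icc 1 (2 ^ M)) (hj : j ∈ Icc 1 (2 ^ M)) :
    (i ≠ j ∧ nint (vdc i - vdc j) ≤ s / (2 ^ M : ℕ)) ↔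
      (vdcResidue M i - vdcResidue M j ≠ 0 ∧
        |(vdcResidue M i - vdcResidue M j).valMinAbs| ≤ l) := by
  have hsub : vdc i - vdc j =
      (((vdcResidue M i).val - (vdcResidue M j).val : ℤ) : ℝ) / (2 ^ M : ℕ) := by
    rw [vdc_eq_vdcResidue_div hi, vdc_eq_vdcResidue_div hj]
    push_cast
    ring
  have hcast : (((vdcResidue M i).val - (vdcResidue M j).val : ℤ) : ZMod (2 ^ M)) =
      vdcResidue M i - vdcResidue M j := by
    push_cast
    simp only [ZMod.natCast_val, ZMod.cast_id', id]
  rw [hsub, nint_intCast_div_le_iff h1 h2, hcast, sub_ne_zero,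
    (bijOn_vdcResidue M).injOn.ne_iff (mem_coe.mpr hi) (mem_coe.mpr hj)]

theorem stmt9 (l : ℕ) (s : ℝ) (h1 : (l : ℝ) ≤ s) (h2 : s < l + 1)
    (M : ℕ) (hM : 2 * l < 2 ^ M) :
    F (2 ^ M) s = 2 * l := by
  have hcard : #{p ∈ Icc 1 (2 ^ M) ×ˢ Icc 1 (2 ^ M) |
      p.1 ≠ p.2 ∧ nint (vdc p.1 - vdc p.2) ≤ s / (2 ^ M : ℕ)} = 2 * l * 2 ^ M := by
    rw [filter_congr fun p hp =>
        ne_and_nint_vdc_sub_le_iff h1 h2 (mem_product.mp hp).1 (mem_product.mp hp).2,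
      card_filter_product_eq_of_bijOn (bijOn_vdcResidue M)
        (fun x y => x - y ≠ 0 ∧ |(x - y).valMinAbs| ≤ l),
      univ_product_univ, card_filter_sub_eq (fun z : ZMod (2 ^ M) => z ≠ 0 ∧ |z.valMinAbs| ≤ l),
      card_filter_valMinAbs_le hM, ZMod.card]
  rw [F, hcard]
  push_cast
  field_simp
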